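/- Let X be a measurable space, U a set (the input set), V_w a measurable space with probability measure P_w, and f : X × U × V_w → X a map such that for each fixed (x, u) the map w ↦ f(x, u, w) is measurable. Let X_in and X_u be measurable subsets of X, H a natural number, and m ∈ ℕ with U ⊆ ℝᵐ. Suppose B_u : X → ℝ is measurable and nonnegative, λ > 1 and c ≥ 0 are constants, and 𝒫 = (𝒫_1, …, 𝒫_m) : X → ℝᵐ is a map with 𝒫(x) ∈ U for every x ∈ X, such that: B_u(x) ≤ 1 for all x ∈ X_in; B_u(x) ≥ λ for all x ∈ X_u; and for all x ∈ X and all u = (u_1, …, u_m) ∈ U, the map w ↦ B_u(f(x,u,w)) is integrable and ∫ B_u(f(x,u,w)) dP_w(w) + Σ_{ℓ=1}^m (u_ℓ − 𝒫_ℓ(x)) ≤ B_u(x) + c. Then, under the feedback controller k(x) = 𝒫(x), for every initial state x0 ∈ X_in the probability, with respect to the product measure P_w^H on noise sequences (w_0, …, w_{H−1}), that the closed-loop trajectory x(0) = x0, x(t+1) = f(x(t), k(x(t)), w_t) satisfies x(t) ∉ X_u for all 0 ≤ t ≤ H, is at least 1 − (1 + c·H)/λ. -/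

import Mathlib

open MeasureTheory
open scoped ENNReal

/-- Closed-loop trajectory of a discrete-time stochastic control system under feedback
controller `k`, driven by a finite noise sequence `w : Fin H → V`:
`x(0) = x0`, `x(t+1) = f (x t) (k (x t)) (w t)` for `t < H` (constant afterwards). -/
noncomputable def trajCL {X U V : Type*} (f : X → U → V → X) (k : X → U) (x0 : X)
    {H : ℕ} (w : Fin H → V) : ℕ → X
  | 0 => x0
  | t + 1 =>
    if h : t < H then f (trajCL f k x0 w t) (k (trajCL f k x0 w t)) (w ⟨t, h⟩)
    else trajCL f k x0 w t


lemma trajCL_shift {X U V : Type*} (f : X → U → V → X) (k : X → U) (x : X) {n : ℕ}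
    (w : Fin (n+1) → V) (t : ℕ) (ht : t ≤ n) :
    trajCL f k x w (t+1) = trajCL f k (f x (k x) (w 0)) (fun j : Fin n => w j.succ) t := by
  induction t with
  | zero => simp [trajCL]
  | succ t ih =>
    have ht' : t ≤ n := Nat.le_of_succ_le ht
    have h1 : t + 1 < n + 1 := Nat.succ_lt_succ (Nat.lt_of_succ_le ht)
    have h2 : t < n := Nat.lt_of_succ_le ht
    show (if h : t + 1 < n + 1 then _ else _) = _
    rw [dif_pos h1, ih ht']
    show _ = if h : t < n then _ else _
    rw [dif_pos h2]
    rfl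

/-- Core supermartingale bound: any measurable subset of the "hit" event has small measure. -/
lemma barrier_key {X V U' : Type*} [MeasurableSpace X] [MeasurableSpace V]
    (Pw : Measure V) [IsProbabilityMeasure Pw]
    (f : X → U' → V → X) (Bu : X → ℝ) (hBu : Measurable Bu)
    (lam c : ℝ) (hlam : 1 < lam) (hc : 0 ≤ c)
    (𝓚 : X → U')
    (hf : ∀ x, Measurable (f x (𝓚 x)))
    (hBu0 : ∀ x, 0 ≤ Bu x)
    (hInt : ∀ x, Integrable (fun w => Bu (f x (𝓚 x) w)) Pw)
    (hdrift : ∀ x, (∫ w, Bu (f x (𝓚 x) w) ∂Pw) ≤ Bu x + c) :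
    ∀ (n : ℕ) (x : X) (K : Set (Fin n → V)), MeasurableSet K →
      (∀ w ∈ K, ∃ t ≤ n, lam ≤ Bu (trajCL f 𝓚 x w t)) →
      Measure.pi (fun _ : Fin n => Pw) K ≤ ENNReal.ofReal ((Bu x + c * n) / lam) := by
  have hlam0 : (0:ℝ) < lam := lt_trans one_pos hlam
  intro n
  induction n with
  | zero =>
    intro x K hK hhit
    rcases Set.eq_empty_or_nonempty K with h | ⟨w, hw⟩
    · simp [h]
    · obtain ⟨t, ht, hB⟩ := hhit w hw
      interval_cases t
      have hx : lam ≤ Bu x := hB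
      calc Measure.pi (fun _ : Fin 0 => Pw) K ≤ Measure.pi (fun _ : Fin 0 => Pw) Set.univ :=
            measure_mono (Set.subset_univ K)
        _ = 1 := measure_univ
        _ ≤ ENNReal.ofReal ((Bu x + c * (0:ℕ)) / lam) := by
            rw [show (1 : ℝ≥0∞) = ENNReal.ofReal 1 by simp]
            apply ENNReal.ofReal_le_ofReal
            rw [le_div_iff₀ hlam0]
            simpa using hx
  | succ n ih =>
    intro x K hK hhit
    by_cases hx : lam ≤ Bu x
    · calc Measure.pi (fun _ : Fin (n+1) => Pw) K ≤ 1 := prob_le_one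
        _ ≤ ENNReal.ofReal ((Bu x + c * (n+1:ℕ)) / lam) := by
            rw [show (1 : ℝ≥0∞) = ENNReal.ofReal 1 by simp]
            apply ENNReal.ofReal_le_ofReal
            rw [le_div_iff₀ hlam0]
            have : (0:ℝ) ≤ c * (n+1:ℕ) := by positivity
            linarith
    · push_neg at hx
      set e := MeasurableEquiv.piFinSuccAbove (fun _ : Fin (n+1) => V) 0 with he
      have hmp := measurePreserving_piFinSuccAbove (fun _ : Fin (n+1) => Pw) 0
      set S : Set (V × (Fin n → V)) := e.symm ⁻¹' K with hS
      have hSm : MeasurableSet S := e.symm.measurable hK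
      have hKS : K = e ⁻¹' S := by
        rw [hS, ← Set.preimage_comp]
        simp
      have hmeas : Measure.pi (fun _ : Fin (n+1) => Pw) K
          = (Pw.prod (Measure.pi fun _ : Fin n => Pw)) S := by
        rw [hKS]
        exact hmp.measure_preimage hSm.nullMeasurableSet
      rw [hmeas, Measure.prod_apply hSm]
      -- section bound
      have hsec : ∀ v : V, (Measure.pi fun _ : Fin n => Pw) (Prod.mk v ⁻¹' S)
          ≤ ENNReal.ofReal ((Bu (f x (𝓚 x) v) + c * n) / lam) := by
        intro v
        apply ih (f x (𝓚 x) v)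
        · exact measurable_prodMk_left (e.symm.measurable hK)
        · intro w' hw'
          have hwK : e.symm (v, w') ∈ K := hw'
          obtain ⟨t, ht, hB⟩ := hhit _ hwK
          have hev : e (e.symm (v, w')) = (v, w') := e.apply_symm_apply _
          have h0 : (e.symm (v, w')) 0 = v := by
            have := congrArg Prod.fst hev
            simpa [e, MeasurableEquiv.piFinSuccAbove] using this
          have hsucc : (fun j : Fin n => (e.symm (v, w')) j.succ) = w' := by
            have := congrArg Prod.snd hev
            funext j
            have h2 := congrFun this j
            simpa [e, MeasurableEquiv.piFinSuccAbove, Fin.succAbove] using h2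
          match t, ht with
          | 0, _ =>
            exact absurd hB (not_le.mpr hx)
          | t+1, ht =>
            refine ⟨t, Nat.lt_succ_iff.mp ht, ?_⟩
            rw [trajCL_shift f 𝓚 x _ t (Nat.lt_succ_iff.mp ht), h0, hsucc] at hB
            exact hB
      calc ∫⁻ v, (Measure.pi fun _ : Fin n => Pw) (Prod.mk v ⁻¹' S) ∂Pw
          ≤ ∫⁻ v, ENNReal.ofReal ((Bu (f x (𝓚 x) v) + c * n) / lam) ∂Pw :=
            lintegral_mono hsec
        _ = ENNReal.ofReal (∫ v, (Bu (f x (𝓚 x) v) + c * n) / lam ∂Pw) := by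
            rw [← ofReal_integral_eq_lintegral_ofReal]
            · exact ((hInt x).add (integrable_const _)).div_const lam
            · filter_upwards with v
              have := hBu0 (f x (𝓚 x) v)
              positivity
        _ ≤ ENNReal.ofReal ((Bu x + c * (n+1:ℕ)) / lam) := by
            apply ENNReal.ofReal_le_ofReal
            rw [integral_div, integral_add (hInt x) (integrable_const _), integral_const]
            simp only [measure_univ, ENNReal.toReal_one, probReal_univ, smul_eq_mul, one_mul]
            rw [div_le_div_iff_of_pos_right]
            · push_cast
              linarith [hdrift x]
            · exact hlam0

/-- Control-barrier-certificate safety bound: under the feedback controller `k(x) = 𝓚(x)`,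
every closed-loop trajectory starting in `X_in` avoids `X_u` up to time `H` with probability
at least `1 - (1 + c·H)/λ` w.r.t. the product noise measure `P_w^H`. -/
theorem control_barrier_safety {X V : Type*} [MeasurableSpace X] [MeasurableSpace V]
    {m : ℕ} (U : Set (EuclideanSpace ℝ (Fin m)))
    (Pw : Measure V) [IsProbabilityMeasure Pw]
    (f : X → EuclideanSpace ℝ (Fin m) → V → X)
    (hf : ∀ x u, Measurable (f x u))
    (Xin Xu : Set X) (hXin : MeasurableSet Xin) (hXu : MeasurableSet Xu)
    (H : ℕ) (Bu : X → ℝ) (hBu : Measurable Bu)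
    (lam c : ℝ) (hlam : 1 < lam) (hc : 0 ≤ c)
    (𝓚 : X → EuclideanSpace ℝ (Fin m)) (h𝓚 : ∀ x, 𝓚 x ∈ U)
    (hBu0 : ∀ x, 0 ≤ Bu x)
    (hBu1 : ∀ x ∈ Xin, Bu x ≤ 1)
    (hBu2 : ∀ x ∈ Xu, lam ≤ Bu x)
    (hInt : ∀ x, ∀ u ∈ U, Integrable (fun w => Bu (f x u w)) Pw)
    (hBu3 : ∀ x, ∀ u ∈ U,
      (∫ w, Bu (f x u w) ∂Pw) + ∑ ℓ : Fin m, (u ℓ - 𝓚 x ℓ) ≤ Bu x + c) :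
    ∀ x0 ∈ Xin,
      ENNReal.ofReal (1 - (1 + c * H) / lam) ≤
        Measure.pi (fun _ : Fin H => Pw)
          {w | ∀ t ≤ H, trajCL f 𝓚 x0 w t ∉ Xu} := by
  intro x0 hx0
  have hlam0 : (0:ℝ) < lam := lt_trans one_pos hlam
  have hdrift : ∀ x, (∫ w, Bu (f x (𝓚 x) w) ∂Pw) ≤ Bu x + c := by
    intro x
    have := hBu3 x (𝓚 x) (h𝓚 x)
    simpa using this
  have key := barrier_key Pw f Bu hBu lam c hlam hc 𝓚 (fun x => hf x (𝓚 x)) hBu0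
    (fun x => hInt x (𝓚 x) (h𝓚 x)) hdrift
  set μ := Measure.pi (fun _ : Fin H => Pw) with hμ
  set b : ℝ := (1 + c * H) / lam with hb
  have hb0 : 0 ≤ b := by positivity
  rw [measure_eq_iInf]
  refine le_iInf fun T => le_iInf fun hT => le_iInf fun hTm => ?_
  -- Tᶜ is a measurable subset of the "hit" event
  have hTc : μ Tᶜ ≤ ENNReal.ofReal b := by
    have hhit : ∀ w ∈ Tᶜ, ∃ t ≤ H, lam ≤ Bu (trajCL f 𝓚 x0 w t) := by
      intro w hw
      have hwS : w ∉ {w | ∀ t ≤ H, trajCL f 𝓚 x0 w t ∉ Xu} := fun h => hw (hT h)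
      simp only [Set.mem_setOf_eq, not_forall] at hwS
      obtain ⟨t, ht, hmem⟩ := hwS
      refine ⟨t, ht, hBu2 _ (not_not.mp hmem)⟩
    calc μ Tᶜ ≤ ENNReal.ofReal ((Bu x0 + c * H) / lam) := key H x0 Tᶜ hTm.compl hhit
      _ ≤ ENNReal.ofReal b := by
          apply ENNReal.ofReal_le_ofReal
          rw [hb]
          gcongr
          exact hBu1 x0 hx0
  by_cases h1b : 1 - b ≤ 0
  · simpa [ENNReal.ofReal_eq_zero.mpr h1b] using zero_le (μ T)
  · push_neg at h1b
    have hble : b ≤ 1 := by linarith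
    have : ENNReal.ofReal (1 - b) = 1 - ENNReal.ofReal b := by
      rw [ENNReal.ofReal_sub _ hb0, ENNReal.ofReal_one]
    rw [this]
    rw [tsub_le_iff_right]
    calc (1:ℝ≥0∞) = μ Set.univ := measure_univ.symm
      _ = μ (T ∪ Tᶜ) := by rw [Set.union_compl_self]
      _ ≤ μ T + μ Tᶜ := measure_union_le T Tᶜ
      _ ≤ μ T + ENNReal.ofReal b := add_le_add_right hTc _
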